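/- Let 0<q<1 and 0<ε²<1−sqrt(1−q), and let Φ_{AB} be a maximally entangled state with dim A = dim B = d. Then the smooth conditional min-entropy of the subnormalized state qΦ satisfies H_min^ε(A|B)_{qΦ} ≤ −log d + log(1/(1−ε²−sqrt(1−q))). -/

import Mathlib

open Matrix Kronecker ComplexOrder

noncomputable section

variable {n : Type*} [Fintype n] [DecidableEq n]

/-- The PSD square root `U √D U*` of a positive semidefinite matrix (the former
`Matrix.PosSemidef.sqrt` of Mathlib, removed since). -/
def Matrix.PosSemidef.psdSqrt {A : Matrix n n ℂ} (hA : A.PosSemidef) : Matrix n n ℂ :=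
  hA.1.eigenvectorUnitary.1 * diagonal ((↑) ∘ (√·) ∘ hA.1.eigenvalues) *
  (star hA.1.eigenvectorUnitary : Matrix n n ℂ)

open Classical in
/-- The square root of a matrix: the PSD square root if the matrix is PSD, else 0. -/
def msqrt (A : Matrix n n ℂ) : Matrix n n ℂ :=
  if h : A.PosSemidef then h.psdSqrt else 0

/-- The trace norm (Schatten 1-norm) of a matrix. -/
def trNorm (A : Matrix n n ℂ) : ℝ :=
  ((Matrix.posSemidef_conjTranspose_mul_self A).psdSqrt.trace).re

/-- The operator norm of a matrix, acting on the Euclidean space. -/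
def opNorm (A : Matrix n n ℂ) : ℝ :=
  ‖(Matrix.toEuclideanCLM (𝕜 := ℂ) A : EuclideanSpace ℂ n →L[ℂ] EuclideanSpace ℂ n)‖

/-- A (normalized) quantum state: positive semidefinite with unit trace. -/
def IsState (ρ : Matrix n n ℂ) : Prop := ρ.PosSemidef ∧ ρ.trace = 1

/-- A subnormalized quantum state: positive semidefinite with trace at most one. -/
def IsSubState (ρ : Matrix n n ℂ) : Prop := ρ.PosSemidef ∧ (ρ.trace).re ≤ 1

/-- Loewner (semidefinite) order: `A ≤ B` iff `B - A` is positive semidefinite. -/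
def LoewnerLE (A B : Matrix n n ℂ) : Prop := (B - A).PosSemidef

/-- Fidelity `F(ρ,σ) = ‖√ρ√σ‖₁` (extended to positive operators). -/
def fid (ρ σ : Matrix n n ℂ) : ℝ := trNorm (msqrt ρ * msqrt σ)

/-- Generalized fidelity for subnormalized states. -/
def gFid (ρ σ : Matrix n n ℂ) : ℝ :=
  fid ρ σ + Real.sqrt ((1 - ρ.trace.re) * (1 - σ.trace.re))

/-- (Generalized) purified distance `P(ρ,σ) = sqrt(1 - F(ρ,σ)²)`. -/
def pDist (ρ σ : Matrix n n ℂ) : ℝ := Real.sqrt (1 - (gFid ρ σ)^2)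

/-- Generalized trace distance `δ(ρ,σ) = (‖ρ-σ‖₁ + |Tr(ρ-σ)|)/2` for subnormalized states. -/
def trDist (ρ σ : Matrix n n ℂ) : ℝ :=
  (trNorm (ρ - σ) + |(ρ.trace - σ.trace).re|) / 2

variable {α β γ : Type*} [Fintype α] [DecidableEq α] [Fintype β] [DecidableEq β]
  [Fintype γ] [DecidableEq γ]

/-- Partial trace over the second tensor factor. -/
def ptrSnd (ρ : Matrix (α × β) (α × β) ℂ) : Matrix α α ℂ :=
  fun i j => ∑ k, ρ (i, k) (j, k)

/-- Partial trace over the first tensor factor. -/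
def ptrFst (ρ : Matrix (α × β) (α × β) ℂ) : Matrix β β ℂ :=
  fun i j => ∑ k, ρ (k, i) (k, j)

/-- Partial trace over the middle factor of a tripartite system `(α × β) × γ`. -/
def ptrMid (ρ : Matrix ((α × β) × γ) ((α × β) × γ) ℂ) : Matrix (α × γ) (α × γ) ℂ :=
  fun p q => ∑ m, ρ ((p.1, m), p.2) ((q.1, m), q.2)

/-- Max-relative entropy `D_max(ρ‖σ) = inf {λ : ρ ≤ 2^λ σ}`. -/
def Dmax (ρ σ : Matrix n n ℂ) : ℝ :=
  sInf {l : ℝ | LoewnerLE ρ (((2:ℝ) ^ l) • σ)}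

open Classical in
/-- von Neumann entropy (base 2) of a matrix (0 if not Hermitian). -/
def vnEntropy (ρ : Matrix n n ℂ) : ℝ :=
  if h : ρ.IsHermitian then -∑ i, (h.eigenvalues i) * Real.logb 2 (h.eigenvalues i) else 0

/-- Conditional min-entropy `H_min(A|B)_τ`. -/
def HminCond {α β : Type*} [Fintype α] [DecidableEq α] [Fintype β] [DecidableEq β]
    (τ : Matrix (α × β) (α × β) ℂ) : ℝ :=
  sSup {l : ℝ | ∃ σ : Matrix β β ℂ, IsState σ ∧
    LoewnerLE τ (((2:ℝ) ^ (-l)) • ((1 : Matrix α α ℂ) ⊗ₖ σ))}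

/-- Smooth conditional min-entropy over the purified-distance ε-ball of subnormalized
states. -/
def sHminCond {α β : Type*} [Fintype α] [DecidableEq α] [Fintype β] [DecidableEq β]
    (ε : ℝ) (ρ : Matrix (α × β) (α × β) ℂ) : ℝ :=
  sSup {x : ℝ | ∃ τ : Matrix (α × β) (α × β) ℂ,
    IsSubState τ ∧ pDist ρ τ ≤ ε ∧ x = HminCond τ}

/-- The maximally entangled state `Φ_{AB} = |Φ⟩⟨Φ|`, `|Φ⟩ = (1/√d)Σᵢ|i⟩|i⟩`. -/
def maxEntState (d : ℕ) : Matrix (Fin d × Fin d) (Fin d × Fin d) ℂ :=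
  fun p q => if p.1 = p.2 ∧ q.1 = q.2 then ((d : ℂ))⁻¹ else 0

section PsdSqrtAux
open scoped MatrixOrder

lemma Matrix.PosSemidef.psdSqrt_eq_cfc {A : Matrix n n ℂ} (hA : A.PosSemidef) :
    hA.psdSqrt = CFC.sqrt A := by
  rw [CFC.sqrt_eq_cfc, cfc_nnreal_eq_real _ A hA.nonneg, hA.1.cfc_eq]
  simp only [IsHermitian.cfc, Matrix.PosSemidef.psdSqrt, Unitary.conjStarAlgAut_apply]
  congr 3
  ext i
  simp [Real.coe_sqrt, Real.coe_toNNReal', max_eq_left (hA.eigenvalues_nonneg i)]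

lemma Matrix.PosSemidef.posSemidef_psdSqrt {A : Matrix n n ℂ} (hA : A.PosSemidef) :
    hA.psdSqrt.PosSemidef := by
  rw [hA.psdSqrt_eq_cfc]; exact (CFC.sqrt_nonneg A).posSemidef

lemma Matrix.PosSemidef.psdSqrt_mul_self {A : Matrix n n ℂ} (hA : A.PosSemidef) :
    hA.psdSqrt * hA.psdSqrt = A := by
  rw [hA.psdSqrt_eq_cfc]; exact CFC.sqrt_mul_sqrt_self A hA.nonneg

lemma Matrix.PosSemidef.eq_psdSqrt_of_sq_eq {A B : Matrix n n ℂ} (hA : A.PosSemidef)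
    (hB : B.PosSemidef) (h : A ^ 2 = B) : A = hB.psdSqrt := by
  rw [hB.psdSqrt_eq_cfc]
  exact (CFC.sqrt_unique (by rw [← h, sq]) hA.nonneg).symm

lemma Matrix.PosSemidef.psdSqrt_sq {A : Matrix n n ℂ} (hA : A.PosSemidef) :
    (hA.pow 2).psdSqrt = A :=
  (hA.eq_psdSqrt_of_sq_eq (hA.pow 2) rfl).symm

lemma sm_psd_eq_ct_mul_self {A : Matrix n n ℂ} (hA : A.PosSemidef) : ∃ B : Matrix n n ℂ, A = Bᴴ * B := by
  obtain ⟨B, hB⟩ := CStarAlgebra.nonneg_iff_eq_star_mul_self.mp hA.nonneg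
  exact ⟨B, hB⟩

end PsdSqrtAux

section SM15Aux
set_option linter.unusedSectionVars false

open Matrix

/-- real smul equals complex smul by the coercion. -/
lemma sm_real_smul (r : ℝ) (M : Matrix n n ℂ) : r • M = (r : ℂ) • M := by
  ext i j; simp [Matrix.smul_apply, Complex.real_smul]

lemma sm_psd_smul {c : ℝ} (hc : 0 ≤ c) {M : Matrix n n ℂ} (hM : M.PosSemidef) :
    ((c : ℂ) • M).PosSemidef := by
  refine Matrix.PosSemidef.of_dotProduct_mulVec_nonneg ?_ fun x => ?_
  · have h1 := hM.1
    unfold Matrix.IsHermitian at h1 ⊢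
    rw [conjTranspose_smul, h1, Complex.star_def, Complex.conj_ofReal]
  · rw [smul_mulVec, dotProduct_smul, smul_eq_mul]
    exact mul_nonneg (by exact_mod_cast hc) (hM.dotProduct_mulVec_nonneg x)

lemma sm_psd_trace_re_nonneg {M : Matrix n n ℂ} (hM : M.PosSemidef) : 0 ≤ M.trace.re := by
  have h : ∀ i, 0 ≤ (M i i).re := by
    intro i
    have h := hM.dotProduct_mulVec_nonneg (Pi.single i 1)
    rw [Complex.le_def] at h
    have : (dotProduct (star (Pi.single i 1)) (M *ᵥ Pi.single i 1)) = M i i := by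
      simp [dotProduct, Matrix.mulVec, Pi.single_apply]
    rw [this] at h
    simpa using h.1
  rw [Matrix.trace, Complex.re_sum]
  exact Finset.sum_nonneg fun i _ => h i

lemma sm_psd_mul_trace_re_nonneg {M N : Matrix n n ℂ} (hM : M.PosSemidef)
    (hN : N.PosSemidef) : 0 ≤ (M * N).trace.re := by
  obtain ⟨B, rfl⟩ := sm_psd_eq_ct_mul_self hN
  have h1 : (M * (Bᴴ * B)).trace = (B * M * Bᴴ).trace := by
    rw [Matrix.trace_mul_cycle B M Bᴴ, Matrix.trace_mul_comm]
  rw [h1]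
  exact sm_psd_trace_re_nonneg (hM.mul_mul_conjTranspose_same B)

lemma sm_vecMulVec_psd (v : n → ℂ) : (Matrix.vecMulVec v (star v)).PosSemidef := by
  have h : Matrix.vecMulVec v (star v)
      = (Matrix.of fun (_ : Unit) j => star (v j))ᴴ * (Matrix.of fun (_ : Unit) j => star (v j)) := by
    ext i j
    simp [Matrix.mul_apply, Matrix.vecMulVec_apply, Matrix.conjTranspose_apply]
  rw [h]
  exact Matrix.posSemidef_conjTranspose_mul_self _

lemma sm_vecMulVec_mul_self (v : n → ℂ) :
    Matrix.vecMulVec v (star v) * Matrix.vecMulVec v (star v)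
      = (dotProduct (star v) v) • Matrix.vecMulVec v (star v) := by
  ext i j
  simp only [Matrix.mul_apply, Matrix.vecMulVec_apply, Matrix.smul_apply, smul_eq_mul,
    dotProduct]
  rw [Finset.sum_mul]
  congr 1; ext k; ring

lemma sm_dot_self_real (v : n → ℂ) :
    dotProduct (star v) v = ((dotProduct (star v) v).re : ℂ) := by
  have : dotProduct (star v) v = ((∑ i, Complex.normSq (v i) : ℝ) : ℂ) := by
    simp [dotProduct, Complex.normSq_eq_conj_mul_self]
  rw [this]; simp

lemma sm_sqrt_congr {A B : Matrix n n ℂ} (hA : A.PosSemidef) (hB : B.PosSemidef)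
    (h : A = B) : hA.psdSqrt = hB.psdSqrt := by subst h; rfl

lemma sm_dot_re_eq (v : n → ℂ) :
    (dotProduct (star v) v).re = ∑ i, Complex.normSq (v i) := by
  have h := sm_dot_self_real v
  simp only [dotProduct, Pi.star_apply, Complex.re_sum]
  congr 1
  ext i
  simp [Complex.normSq_apply, Complex.mul_re]

lemma sm_trace_sqrt_vecMulVec (v : n → ℂ) (h : (Matrix.vecMulVec v (star v)).PosSemidef) :
    (h.psdSqrt.trace).re = Real.sqrt ((dotProduct (star v) v).re) := by
  by_cases hv : v = 0
  · subst hv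
    have hs : (0 : Matrix n n ℂ) = h.psdSqrt :=
      Matrix.PosSemidef.eq_psdSqrt_of_sq_eq Matrix.PosSemidef.zero h
        (by ext i j; simp [Matrix.vecMulVec_apply])
    rw [← hs]
    simp [dotProduct]
  · have hre : 0 < (dotProduct (star v) v).re := by
      rw [sm_dot_re_eq]
      obtain ⟨i, hi⟩ := Function.ne_iff.mp hv
      exact Finset.sum_pos' (fun j _ => Complex.normSq_nonneg _)
        ⟨i, Finset.mem_univ i, Complex.normSq_pos.mpr hi⟩
    set r := Real.sqrt ((dotProduct (star v) v).re) with hr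
    have hrpos : 0 < r := Real.sqrt_pos.mpr hre
    have hdr : dotProduct (star v) v = ((r ^ 2 : ℝ) : ℂ) := by
      rw [sm_dot_self_real, hr, Real.sq_sqrt hre.le]
    have hS : (((r⁻¹ : ℝ) : ℂ) • Matrix.vecMulVec v (star v)).PosSemidef :=
      sm_psd_smul (inv_nonneg.mpr hrpos.le) (sm_vecMulVec_psd v)
    have hsq : (((r⁻¹ : ℝ) : ℂ) • Matrix.vecMulVec v (star v)) ^ 2
        = Matrix.vecMulVec v (star v) := by
      rw [pow_two, smul_mul_assoc, mul_smul_comm, smul_smul, sm_vecMulVec_mul_self, hdr,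
        smul_smul]
      have hcoef : ((r⁻¹ : ℝ) : ℂ) * ((r⁻¹ : ℝ) : ℂ) * ((r ^ 2 : ℝ) : ℂ) = 1 := by
        push_cast
        rw [pow_two]
        field_simp
      rw [hcoef, one_smul]
    have heq := Matrix.PosSemidef.eq_psdSqrt_of_sq_eq hS h hsq
    rw [← heq]
    have htr : (Matrix.vecMulVec v (star v)).trace = ((r ^ 2 : ℝ) : ℂ) := by
      rw [← hdr]
      simp [Matrix.trace, Matrix.diag, Matrix.vecMulVec_apply, dotProduct, mul_comm]
    rw [Matrix.trace_smul, htr, smul_eq_mul]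
    have : ((r⁻¹ : ℝ) : ℂ) * ((r ^ 2 : ℝ) : ℂ) = ((r : ℝ) : ℂ) := by
      push_cast
      field_simp
    rw [this, Complex.ofReal_re]

lemma sm_trNorm_rankOne (A : Matrix n n ℂ) (z : n → ℂ)
    (h : Aᴴ * A = Matrix.vecMulVec z (star z)) :
    trNorm A = Real.sqrt ((dotProduct (star z) z).re) := by
  have hP := Matrix.posSemidef_conjTranspose_mul_self A
  have hM : (Matrix.vecMulVec z (star z)).PosSemidef := h ▸ hP
  have : hP.psdSqrt = hM.psdSqrt := sm_sqrt_congr hP hM h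
  rw [trNorm, this]
  exact sm_trace_sqrt_vecMulVec z hM

lemma sm_trNorm_psd {M : Matrix n n ℂ} (hM : M.PosSemidef) : trNorm M = M.trace.re := by
  have hP := Matrix.posSemidef_conjTranspose_mul_self M
  have h2 : Mᴴ * M = M ^ 2 := by rw [hM.1, pow_two]
  have : hP.psdSqrt = (hM.pow 2).psdSqrt := sm_sqrt_congr hP (hM.pow 2) h2
  rw [trNorm, this, hM.psdSqrt_sq]

lemma sm_herm_dot_real (H : Matrix n n ℂ) (hH : H.IsHermitian) (x : n → ℂ) :
    dotProduct (star x) (H *ᵥ x)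
      = (((dotProduct (star x) (H *ᵥ x)).re : ℝ) : ℂ) := by
  set z := dotProduct (star x) (H *ᵥ x) with hz
  have hc : (starRingEnd ℂ) z = z := by
    have h1 : star z = dotProduct x (star (H *ᵥ x)) := by
      simp [hz, dotProduct, star_sum, mul_comm]
    have h2 : star (H *ᵥ x) = star x ᵥ* Hᴴ := Matrix.star_mulVec H x
    calc (starRingEnd ℂ) z = star z := rfl
    _ = dotProduct x (star x ᵥ* Hᴴ) := by rw [h1, h2]
    _ = dotProduct (star x ᵥ* H) x := by rw [hH.eq, dotProduct_comm]
    _ = z := by rw [← dotProduct_mulVec]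
  exact (Complex.conj_eq_iff_re.mp hc).symm

lemma sm_trace_re_eq_sum_normSq (B : Matrix n n ℂ) :
    ((Bᴴ * B).trace).re = ∑ i, ∑ j, Complex.normSq (B i j) := by
  rw [Matrix.trace, Complex.re_sum]
  rw [Finset.sum_comm]
  congr 1
  ext j
  rw [Matrix.diag_apply, Matrix.mul_apply, Complex.re_sum]
  congr 1
  ext i
  simp [Matrix.conjTranspose_apply, Complex.normSq_apply, Complex.mul_re]

lemma sm_psd_sub_le_one {τ : Matrix n n ℂ} (hτ : τ.PosSemidef) (ht : τ.trace.re ≤ 1) :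
    ((1 : Matrix n n ℂ) - τ).PosSemidef := by
  have hherm : ((1 : Matrix n n ℂ) - τ).IsHermitian := by
    unfold Matrix.IsHermitian
    rw [Matrix.conjTranspose_sub, Matrix.conjTranspose_one, hτ.1]
  refine Matrix.PosSemidef.of_dotProduct_mulVec_nonneg hherm fun x => ?_
  rw [sm_herm_dot_real _ hherm x]
  rw [Complex.le_def]
  refine ⟨?_, by simp⟩
  simp only [Complex.ofReal_re]
  obtain ⟨B, hB⟩ := sm_psd_eq_ct_mul_self hτ
  have hxy : dotProduct (star x) (τ *ᵥ x)
      = dotProduct (star (B *ᵥ x)) (B *ᵥ x) := by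
    rw [hB, ← Matrix.mulVec_mulVec, dotProduct_mulVec, Matrix.star_mulVec]
  have hsub : dotProduct (star x) (((1 : Matrix n n ℂ) - τ) *ᵥ x)
      = dotProduct (star x) x - dotProduct (star x) (τ *ᵥ x) := by
    rw [Matrix.sub_mulVec]
    simp [dotProduct_sub]
  rw [hsub]
  have hxx : (dotProduct (star x) x).re = ∑ j, Complex.normSq (x j) :=
    sm_dot_re_eq x
  have hyy : (dotProduct (star (B *ᵥ x)) (B *ᵥ x)).re
      = ∑ i, Complex.normSq ((B *ᵥ x) i) := sm_dot_re_eq (B *ᵥ x)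
  have htr : τ.trace.re = ∑ i, ∑ j, Complex.normSq (B i j) := by
    rw [hB, sm_trace_re_eq_sum_normSq]
  have hCS : ∀ i, Complex.normSq ((B *ᵥ x) i)
      ≤ (∑ j, Complex.normSq (B i j)) * (∑ j, Complex.normSq (x j)) := by
    intro i
    have h1 : ‖(B *ᵥ x) i‖ ≤ ∑ j, ‖B i j‖ * ‖x j‖ := by
      rw [Matrix.mulVec]
      refine le_trans (norm_sum_le _ _) ?_
      apply le_of_eq
      congr 1
      ext j
      exact norm_mul _ _
    have h2 : (∑ j, ‖B i j‖ * ‖x j‖) ^ 2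
        ≤ (∑ j, ‖B i j‖ ^ 2) * (∑ j, ‖x j‖ ^ 2) :=
      Finset.sum_mul_sq_le_sq_mul_sq _ _ _
    have h3 : ‖(B *ᵥ x) i‖ ^ 2
        ≤ (∑ j, ‖B i j‖ ^ 2) * (∑ j, ‖x j‖ ^ 2) :=
      le_trans (pow_le_pow_left₀ (norm_nonneg _) h1 2) h2
    simpa [Complex.sq_norm] using h3
  have hsum : ∑ i, Complex.normSq ((B *ᵥ x) i)
      ≤ (∑ i, ∑ j, Complex.normSq (B i j)) * (∑ j, Complex.normSq (x j)) := by
    rw [Finset.sum_mul]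
    exact Finset.sum_le_sum fun i _ => hCS i
  have hxnn : 0 ≤ ∑ j, Complex.normSq (x j) :=
    Finset.sum_nonneg fun j _ => Complex.normSq_nonneg _
  have hfin : ∑ i, Complex.normSq ((B *ᵥ x) i) ≤ ∑ j, Complex.normSq (x j) := by
    calc ∑ i, Complex.normSq ((B *ᵥ x) i)
        ≤ (∑ i, ∑ j, Complex.normSq (B i j)) * (∑ j, Complex.normSq (x j)) := hsum
    _ ≤ 1 * (∑ j, Complex.normSq (x j)) := by
        apply mul_le_mul_of_nonneg_right _ hxnn
        rw [← htr]; exact ht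
    _ = ∑ j, Complex.normSq (x j) := one_mul _
  rw [Complex.sub_re, hxx, hxy, hyy, Complex.zero_re]
  linarith

lemma sm_trace_vecMulVec_mul (v : n → ℂ) (τ : Matrix n n ℂ) :
    (Matrix.vecMulVec v (star v) * τ).trace = dotProduct (star v) (τ *ᵥ v) := by
  simp only [Matrix.trace, Matrix.diag, Matrix.mul_apply, Matrix.vecMulVec_apply,
    dotProduct, Matrix.mulVec, Pi.star_apply, Finset.mul_sum]
  rw [Finset.sum_comm]
  congr 1
  ext q
  congr 1
  ext p
  ring

set_option maxHeartbeats 2000000 in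
lemma sm_key_ineq (q a s t : ℝ) (hq0 : 0 < q) (hq1 : q < 1) (ha0 : 0 < a)
    (ha1 : a < 1 - Real.sqrt (1 - q)) (hs0 : 0 ≤ s) (hst : s ≤ t) (ht1 : t ≤ 1)
    (hg : 1 - a ≤ (Real.sqrt (q * s) + Real.sqrt ((1 - q) * (1 - t))) ^ 2) :
    1 - a - Real.sqrt (1 - q) ≤ s := by
  set u := Real.sqrt (1 - q) with hu
  have hu0 : 0 < u := Real.sqrt_pos.mpr (by linarith)
  have hu2 : u ^ 2 = 1 - q := Real.sq_sqrt (by linarith)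
  have hu1 : u < 1 := by nlinarith [hu2, hu0]
  have hs1 : s ≤ 1 := le_trans hst ht1
  set A := Real.sqrt (q * s) with hA
  set B' := Real.sqrt ((1 - q) * (1 - s)) with hB'
  have hA0 : 0 ≤ A := Real.sqrt_nonneg _
  have hB'0 : 0 ≤ B' := Real.sqrt_nonneg _
  have hA2 : A ^ 2 = q * s := Real.sq_sqrt (mul_nonneg hq0.le hs0)
  have hB'2 : B' ^ 2 = (1 - q) * (1 - s) := Real.sq_sqrt (mul_nonneg (by linarith) (by linarith))
  have hBB' : Real.sqrt ((1 - q) * (1 - t)) ≤ B' := by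
    apply Real.sqrt_le_sqrt
    nlinarith
  have hg' : 1 - a ≤ (A + B') ^ 2 := by
    refine le_trans hg ?_
    have h0 : 0 ≤ Real.sqrt (q * s) + Real.sqrt ((1 - q) * (1 - t)) :=
      add_nonneg (Real.sqrt_nonneg _) (Real.sqrt_nonneg _)
    apply pow_le_pow_left₀ h0
    linarith
  by_contra hcon
  push_neg at hcon
  have h2AB : 1 - a - s - u ^ 2 + 2 * u ^ 2 * s ≤ 2 * (A * B') := by nlinarith
  have hABsq : (A * B') ^ 2 = (q * s) * ((1 - q) * (1 - s)) := by
    rw [mul_pow, hA2, hB'2]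
  have hL : u * ((1 + u) - 2 * u * (1 - s)) < 1 - a - s - u ^ 2 + 2 * u ^ 2 * s := by
    nlinarith
  have hpos : 0 ≤ u * ((1 + u) - 2 * u * (1 - s)) := by
    nlinarith [mul_nonneg (mul_nonneg hu0.le hu0.le) hs0, mul_nonneg hu0.le hu0.le]
  have hlt : u * ((1 + u) - 2 * u * (1 - s)) < 2 * (A * B') := lt_of_lt_of_le hL h2AB
  have hsq : (u * ((1 + u) - 2 * u * (1 - s))) ^ 2 < (2 * (A * B')) ^ 2 :=
    pow_lt_pow_left₀ hlt hpos (by norm_num)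
  have hq' : q = 1 - u ^ 2 := by linarith
  have h4 : (2 * (A * B')) ^ 2 = 4 * (u ^ 2 * ((1 - u ^ 2) * (s * (1 - s)))) := by
    have : (2 * (A * B')) ^ 2 = 4 * ((q * s) * ((1 - q) * (1 - s))) := by
      rw [mul_pow, hABsq]; ring
    rw [this, hq']; ring
  have hid : (u * ((1 + u) - 2 * u * (1 - s))) ^ 2
      = 4 * (u ^ 2 * ((1 - u ^ 2) * (s * (1 - s)))) + u ^ 2 * (1 + u - 2 * (1 - s)) ^ 2 := by
    ring
  nlinarith [mul_nonneg (sq_nonneg u) (sq_nonneg (1 + u - 2 * (1 - s)))]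

lemma sm_herm_conj_vecMulVec {S : Matrix n n ℂ} (hS : S.IsHermitian) (w : n → ℂ) :
    S * Matrix.vecMulVec w (star w) * S = Matrix.vecMulVec (S *ᵥ w) (star (S *ᵥ w)) := by
  ext i j
  rw [Matrix.mul_apply]
  have h1 : ∀ l, (S * Matrix.vecMulVec w (star w)) i l
      = (∑ k, S i k * w k) * star (w l) := by
    intro l
    rw [Matrix.mul_apply, Finset.sum_mul]
    congr 1
    ext k
    simp only [Matrix.vecMulVec_apply, Pi.star_apply]
    ring
  simp_rw [h1]
  rw [Matrix.vecMulVec_apply]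
  simp only [Matrix.mulVec, dotProduct, Pi.star_apply, star_sum]
  rw [Finset.mul_sum]
  congr 1
  ext l
  have hst : star (S j l * w l) = star (w l) * S l j := by
    rw [StarMul.star_mul, hS.apply l j]
  rw [hst]
  ring

def sm_wv (d : ℕ) : Fin d × Fin d → ℂ :=
  fun p => if p.1 = p.2 then (((Real.sqrt d : ℝ) : ℂ))⁻¹ else 0

lemma sm_sqrtd_mul (d : ℕ) :
    (((Real.sqrt d : ℝ) : ℂ))⁻¹ * (((Real.sqrt d : ℝ) : ℂ))⁻¹ = ((d : ℕ) : ℂ)⁻¹ := by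
  rw [← mul_inv, ← Complex.ofReal_mul, Real.mul_self_sqrt (Nat.cast_nonneg d),
    Complex.ofReal_natCast]

lemma sm_star_wv (d : ℕ) : star (sm_wv d) = sm_wv d := by
  ext p
  simp only [Pi.star_apply, sm_wv]
  split <;> simp

lemma sm_maxEnt_eq (d : ℕ) :
    maxEntState d = Matrix.vecMulVec (sm_wv d) (star (sm_wv d)) := by
  rw [sm_star_wv]
  ext p q
  simp only [maxEntState, Matrix.vecMulVec_apply, sm_wv]
  by_cases h1 : p.1 = p.2 <;> by_cases h2 : q.1 = q.2 <;>
    simp [h1, h2, sm_sqrtd_mul d]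

lemma sm_wv_dot (d : ℕ) (hd : 0 < d) :
    dotProduct (star (sm_wv d)) (sm_wv d) = 1 := by
  rw [sm_star_wv]
  simp only [dotProduct, sm_wv, Fintype.sum_prod_type, ite_mul, mul_ite, zero_mul,
    mul_zero]
  simp only [sm_sqrtd_mul d]
  rw [Finset.sum_comm]
  have : ∀ j : Fin d, (∑ i : Fin d, if i = j then (if i = j then ((d:ℕ):ℂ)⁻¹ else 0) else 0)
      = ((d:ℕ):ℂ)⁻¹ := by
    intro j
    rw [Finset.sum_ite_eq' Finset.univ j (fun i => if i = j then ((d:ℕ):ℂ)⁻¹ else 0)]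
    simp
  simp only [this]
  rw [Finset.sum_const, Finset.card_univ, Fintype.card_fin, nsmul_eq_mul]
  rw [mul_inv_cancel₀]
  exact Nat.cast_ne_zero.mpr hd.ne'

lemma sm_Phi_psd (d : ℕ) : (maxEntState d).PosSemidef := by
  rw [sm_maxEnt_eq]
  exact sm_vecMulVec_psd _

lemma sm_Phi_mul_self (d : ℕ) (hd : 0 < d) :
    maxEntState d * maxEntState d = maxEntState d := by
  rw [sm_maxEnt_eq, sm_vecMulVec_mul_self, sm_wv_dot d hd, one_smul]

lemma sm_Phi_trace (d : ℕ) (hd : 0 < d) : (maxEntState d).trace = 1 := by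
  rw [sm_maxEnt_eq]
  have h : (Matrix.vecMulVec (sm_wv d) (star (sm_wv d))).trace
      = dotProduct (star (sm_wv d)) (sm_wv d) := by
    simp [Matrix.trace, Matrix.diag, Matrix.vecMulVec_apply, dotProduct, mul_comm]
  rw [h, sm_wv_dot d hd]

lemma sm_one_sub_Phi_psd (d : ℕ) (hd : 0 < d) :
    ((1 : Matrix (Fin d × Fin d) (Fin d × Fin d) ℂ) - maxEntState d).PosSemidef := by
  have hH : (maxEntState d).IsHermitian := (sm_Phi_psd d).1
  have key : ((1 : Matrix (Fin d × Fin d) (Fin d × Fin d) ℂ) - maxEntState d)ᴴ *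
      ((1 : Matrix (Fin d × Fin d) (Fin d × Fin d) ℂ) - maxEntState d)
      = (1 : Matrix (Fin d × Fin d) (Fin d × Fin d) ℂ) - maxEntState d := by
    rw [Matrix.conjTranspose_sub, Matrix.conjTranspose_one, hH.eq]
    rw [Matrix.sub_mul, Matrix.mul_sub, Matrix.mul_sub, Matrix.one_mul, Matrix.one_mul,
      Matrix.mul_one, sm_Phi_mul_self d hd]
    abel
  rw [← key]
  exact Matrix.posSemidef_conjTranspose_mul_self _

lemma sm_fid_qPhi (d : ℕ) (hd : 0 < d) (q : ℝ) (hq0 : 0 ≤ q)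
    {τ : Matrix (Fin d × Fin d) (Fin d × Fin d) ℂ} (hτ : τ.PosSemidef) :
    fid ((q : ℂ) • maxEntState d) τ
      = Real.sqrt (q * (dotProduct (star (sm_wv d)) (τ *ᵥ sm_wv d)).re) := by
  classical
  have hΦ := sm_Phi_psd d
  have hqΦ : ((q : ℂ) • maxEntState d).PosSemidef := sm_psd_smul hq0 hΦ
  set c : ℂ := ((Real.sqrt q : ℝ) : ℂ) with hc
  have hcc : c * c = ((q : ℝ) : ℂ) := by
    rw [hc, ← Complex.ofReal_mul, Real.mul_self_sqrt hq0]
  have hcstar : star c = c := by rw [hc, Complex.star_def, Complex.conj_ofReal]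
  have hsqp : c • maxEntState d = msqrt ((q : ℂ) • maxEntState d) := by
    rw [msqrt, dif_pos hqΦ]
    apply Matrix.PosSemidef.eq_psdSqrt_of_sq_eq
    · exact sm_psd_smul (Real.sqrt_nonneg q) hΦ
    · rw [pow_two, smul_mul_assoc, mul_smul_comm, smul_smul, sm_Phi_mul_self d hd, hcc]
  have hmτ : msqrt τ = hτ.psdSqrt := by rw [msqrt, dif_pos hτ]
  set S := hτ.psdSqrt with hSdef
  have hSps := hτ.posSemidef_psdSqrt
  have hSh : S.IsHermitian := hSps.1
  rw [fid, ← hsqp, hmτ]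
  set w := sm_wv d with hwdef
  set z : (Fin d × Fin d) → ℂ := c • (S *ᵥ w) with hz
  have hAconj : ((c • maxEntState d) * S)ᴴ = S * (c • maxEntState d) := by
    rw [Matrix.conjTranspose_mul, Matrix.conjTranspose_smul, hΦ.1.eq, hSh.eq, hcstar]
  have hvmv : Matrix.vecMulVec z (star z)
      = (c * c) • Matrix.vecMulVec (S *ᵥ w) (star (S *ᵥ w)) := by
    ext i j
    simp only [Matrix.vecMulVec_apply, Matrix.smul_apply, Pi.smul_apply, Pi.star_apply,
      hz, smul_eq_mul, star_mul', hcstar]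
    ring
  have hAA : ((c • maxEntState d) * S)ᴴ * ((c • maxEntState d) * S)
      = Matrix.vecMulVec z (star z) := by
    rw [hAconj]
    have e1 : S * (c • maxEntState d) * ((c • maxEntState d) * S)
        = (c * c) • (S * (maxEntState d * (maxEntState d * S))) := by
      simp only [Matrix.mul_smul, Matrix.smul_mul, smul_smul, Matrix.mul_assoc]
    have e2 : maxEntState d * (maxEntState d * S) = maxEntState d * S := by
      rw [← Matrix.mul_assoc, sm_Phi_mul_self d hd]
    rw [e1, e2, ← Matrix.mul_assoc, sm_maxEnt_eq, sm_herm_conj_vecMulVec hSh, hvmv]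
  rw [sm_trNorm_rankOne _ z hAA]
  congr 1
  have hy : dotProduct (star (S *ᵥ w)) (S *ᵥ w)
      = dotProduct (star w) (τ *ᵥ w) := by
    rw [Matrix.star_mulVec, hSh.eq, ← dotProduct_mulVec, Matrix.mulVec_mulVec,
      hτ.psdSqrt_mul_self]
  have hzdot : dotProduct (star z) z
      = ((q : ℝ) : ℂ) * dotProduct (star w) (τ *ᵥ w) := by
    rw [hz, star_smul, smul_dotProduct, dotProduct_smul, hcstar, smul_eq_mul,
      smul_eq_mul, ← mul_assoc, hcc, hy]
  rw [hzdot, Complex.re_ofReal_mul]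

lemma sm_dot_le_trace (d : ℕ) (hd : 0 < d)
    {τ : Matrix (Fin d × Fin d) (Fin d × Fin d) ℂ} (hτ : τ.PosSemidef) :
    (dotProduct (star (sm_wv d)) (τ *ᵥ sm_wv d)).re ≤ τ.trace.re := by
  have h := sm_psd_mul_trace_re_nonneg (sm_one_sub_Phi_psd d hd) hτ
  rw [Matrix.sub_mul, Matrix.one_mul, Matrix.trace_sub, Complex.sub_re] at h
  have h2 : (maxEntState d * τ).trace = dotProduct (star (sm_wv d)) (τ *ᵥ sm_wv d) := by
    rw [sm_maxEnt_eq, sm_trace_vecMulVec_mul]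
  rw [h2] at h
  linarith

lemma sm_dot_kron (d : ℕ) (σ : Matrix (Fin d) (Fin d) ℂ) :
    dotProduct (star (sm_wv d)) ((((1 : Matrix (Fin d) (Fin d) ℂ)) ⊗ₖ σ) *ᵥ sm_wv d)
      = ((d : ℕ) : ℂ)⁻¹ * σ.trace := by
  rw [sm_star_wv]
  simp only [dotProduct, Matrix.mulVec, Fintype.sum_prod_type, sm_wv,
    Matrix.kroneckerMap_apply, Matrix.one_apply, ite_mul, mul_ite, mul_zero, zero_mul,
    Finset.sum_ite_eq, Finset.sum_ite_eq', Finset.sum_ite_irrel, Finset.sum_const_zero,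
    Finset.mem_univ, if_true]
  rw [Matrix.trace, Finset.mul_sum]
  congr 1
  ext x
  rw [Matrix.diag_apply]
  have := sm_sqrtd_mul d
  calc ((Real.sqrt d : ℝ) : ℂ)⁻¹ * (1 * σ x x * ((Real.sqrt d : ℝ) : ℂ)⁻¹)
      = (((Real.sqrt d : ℝ) : ℂ)⁻¹ * ((Real.sqrt d : ℝ) : ℂ)⁻¹) * σ x x := by ring
  _ = ((d : ℕ) : ℂ)⁻¹ * σ x x := by rw [sm_sqrtd_mul]

end SM15Aux
/-- Smooth min-entropy of the subnormalized maximally entangled state: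
`H_min^ε(A|B)_{qΦ} ≤ −log d + log(1/(1−ε²−sqrt(1−q)))`. -/
theorem sHminCond_subnormalized_maxEnt_le (d : ℕ) (hd : 0 < d) (q ε : ℝ)
    (hq : 0 < q) (hq1 : q < 1) (hε : 0 < ε) (hε2 : ε^2 < 1 - Real.sqrt (1 - q)) :
    sHminCond ε ((q : ℂ) • maxEntState d) ≤
      - Real.logb 2 d + Real.logb 2 (1 / (1 - ε^2 - Real.sqrt (1 - q))) := by
  classical
  have hu0 : 0 < Real.sqrt (1 - q) := Real.sqrt_pos.mpr (by linarith)
  set u := Real.sqrt (1 - q) with hu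
  set c0 : ℝ := 1 - ε ^ 2 - u with hc0def
  have hc0 : 0 < c0 := by rw [hc0def]; linarith
  have hd0 : (0:ℝ) < d := by exact_mod_cast hd
  have hΦ := sm_Phi_psd d
  have hqΦpsd : ((q : ℂ) • maxEntState d).PosSemidef := sm_psd_smul hq.le hΦ
  have hqtr : ((q : ℂ) • maxEntState d).trace = ((q : ℝ) : ℂ) := by
    rw [Matrix.trace_smul, sm_Phi_trace d hd, smul_eq_mul, mul_one]
  have hqtr_re : ((q : ℂ) • maxEntState d).trace.re = q := by rw [hqtr, Complex.ofReal_re]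
  unfold sHminCond
  apply csSup_le
  · -- nonemptiness: τ = qΦ itself
    refine ⟨HminCond ((q : ℂ) • maxEntState d),
      ⟨(q : ℂ) • maxEntState d, ⟨hqΦpsd, by rw [hqtr_re]; linarith⟩, ?_, rfl⟩⟩
    have hm : msqrt ((q : ℂ) • maxEntState d) = hqΦpsd.psdSqrt := by rw [msqrt, dif_pos hqΦpsd]
    have hfid : fid ((q : ℂ) • maxEntState d) ((q : ℂ) • maxEntState d) = q := by
      rw [fid, hm, hqΦpsd.psdSqrt_mul_self, sm_trNorm_psd hqΦpsd, hqtr_re]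
    rw [pDist, gFid, hfid, hqtr_re]
    have h1 : Real.sqrt ((1 - q) * (1 - q)) = 1 - q := Real.sqrt_mul_self (by linarith)
    rw [h1]
    have h2 : (1 : ℝ) - (q + (1 - q)) ^ 2 = 0 := by ring
    rw [h2, Real.sqrt_zero]
    linarith
  · rintro x ⟨τ, ⟨hτpsd, hτtr⟩, hPd, rfl⟩
    unfold HminCond
    set w := sm_wv d with hwdef
    set s : ℝ := (dotProduct (star (sm_wv d)) (τ *ᵥ sm_wv d)).re with hsdef
    set t : ℝ := τ.trace.re with htdef
    have hs0 : 0 ≤ s := by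
      have := hτpsd.re_dotProduct_nonneg (sm_wv d)
      simpa [hsdef] using this
    have hst : s ≤ t := sm_dot_le_trace d hd hτpsd
    have ht1 : t ≤ 1 := hτtr
    -- fidelity lower bound gives c0 ≤ s
    have hgdef : gFid ((q : ℂ) • maxEntState d) τ
        = Real.sqrt (q * s) + Real.sqrt ((1 - q) * (1 - t)) := by
      rw [gFid, sm_fid_qPhi d hd q hq.le hτpsd, hqtr_re]
    have hg0 : 0 ≤ gFid ((q : ℂ) • maxEntState d) τ := by
      rw [hgdef]; exact add_nonneg (Real.sqrt_nonneg _) (Real.sqrt_nonneg _)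
    have hgsq : 1 - ε ^ 2 ≤ (gFid ((q : ℂ) • maxEntState d) τ) ^ 2 := by
      rw [pDist] at hPd
      rcases le_or_gt (1 - (gFid ((q : ℂ) • maxEntState d) τ) ^ 2) 0 with h | h
      · nlinarith
      · have h1 : Real.sqrt (1 - (gFid ((q : ℂ) • maxEntState d) τ) ^ 2) ^ 2 ≤ ε ^ 2 :=
          pow_le_pow_left₀ (Real.sqrt_nonneg _) hPd 2
        rw [Real.sq_sqrt h.le] at h1
        linarith
    have hc0s : c0 ≤ s := by
      rw [hc0def]
      exact sm_key_ineq q (ε ^ 2) s t hq hq1 (pow_pos hε 2) hε2 hs0 hst ht1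
        (by rw [hgdef] at hgsq; exact hgsq)
    apply csSup_le
    · -- nonemptiness: σ = d⁻¹ • 1, l = -logb 2 d
      refine ⟨-(Real.logb 2 d), ((d : ℂ))⁻¹ • (1 : Matrix (Fin d) (Fin d) ℂ), ⟨?_, ?_⟩, ?_⟩
      · have : ((d : ℂ))⁻¹ • (1 : Matrix (Fin d) (Fin d) ℂ)
            = ((((d:ℝ)⁻¹ : ℝ)) : ℂ) • (1 : Matrix (Fin d) (Fin d) ℂ) := by push_cast; rfl
        rw [this]
        exact sm_psd_smul (by positivity) Matrix.PosSemidef.one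
      · rw [Matrix.trace_smul, Matrix.trace_one, smul_eq_mul]
        simp only [Fintype.card_fin]
        rw [inv_mul_cancel₀ (by exact_mod_cast hd.ne')]
      · have hmat : ((2:ℝ) ^ (-(-(Real.logb 2 d)))) •
            ((1 : Matrix (Fin d) (Fin d) ℂ) ⊗ₖ (((d : ℂ))⁻¹ • (1 : Matrix (Fin d) (Fin d) ℂ)))
            = (1 : Matrix ((Fin d) × (Fin d)) ((Fin d) × (Fin d)) ℂ) := by
          rw [neg_neg, Real.rpow_logb (by norm_num) (by norm_num) hd0]
          rw [Matrix.kronecker_smul, Matrix.one_kronecker_one, sm_real_smul, smul_smul]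
          rw [← Complex.ofReal_natCast]
          rw [mul_inv_cancel₀ (by exact_mod_cast hd0.ne')]
          rw [one_smul]
        rw [hmat]
        exact sm_psd_sub_le_one hτpsd hτtr
    · rintro l ⟨σ, ⟨hσpsd, hσtr⟩, hL⟩
      -- Loewner gives s ≤ 2^(-l)/d
      have hLr := hL.dotProduct_mulVec_nonneg (sm_wv d)
      rw [Matrix.sub_mulVec, dotProduct_sub] at hLr
      have hD1 : dotProduct (star (sm_wv d))
          ((((2:ℝ) ^ (-l)) • ((1 : Matrix (Fin d) (Fin d) ℂ) ⊗ₖ σ)) *ᵥ sm_wv d)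
          = ((((2:ℝ) ^ (-l) * (d:ℝ)⁻¹ : ℝ)) : ℂ) := by
        rw [sm_real_smul, Matrix.smul_mulVec, dotProduct_smul, smul_eq_mul,
          sm_dot_kron d σ, hσtr, mul_one]
        push_cast
        ring
      rw [hD1] at hLr
      have hs_ub : s ≤ (2:ℝ) ^ (-l) * (d:ℝ)⁻¹ := by
        have h := (Complex.le_def.mp hLr).1
        rw [Complex.sub_re, Complex.ofReal_re, Complex.zero_re] at h
        rw [hsdef]
        linarith
      -- combine
      have h2l : c0 * d ≤ (2:ℝ) ^ (-l) := by
        have h1 : c0 ≤ (2:ℝ) ^ (-l) * (d:ℝ)⁻¹ := le_trans hc0s hs_ub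
        calc c0 * d ≤ ((2:ℝ) ^ (-l) * (d:ℝ)⁻¹) * d := by nlinarith
        _ = (2:ℝ) ^ (-l) := by field_simp
      have hlog : Real.logb 2 (c0 * d) ≤ -l := by
        have h1 : Real.logb 2 (c0 * d) ≤ Real.logb 2 ((2:ℝ) ^ (-l)) :=
          Real.logb_le_logb_of_le (by norm_num) (by positivity) h2l
        rwa [Real.logb_rpow (by norm_num) (by norm_num)] at h1
      have hsplit : Real.logb 2 (c0 * d) = Real.logb 2 c0 + Real.logb 2 d :=
        Real.logb_mul hc0.ne' hd0.ne'
      have hone : Real.logb 2 (1 / c0) = - Real.logb 2 c0 := by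
        rw [one_div, Real.logb_inv]
      rw [hone]
      rw [hsplit] at hlog
      linarith
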